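/- arXiv:2211.09198 — 2 statements merged into one kernel-verified Lean document; each statement's English description precedes it below -/
import Mathlib

section
/- In the hardness construction, suppose each of the |V| vertex gadgets requires exactly t_g moves to solve and travel between adjacent vertex gadgets costs exactly s+7 moves, with any bridge between non-adjacent gadgets costing strictly more than s+7 moves. Then the minimum number of moves of any reconfiguration sequence solving all gadgets is exactly (s+7)·(|V|-1) + t_g·|V| if and only if the underlying grid graph has a Hamiltonian path. -/
def travelCost {V : Type*} (G : SimpleGraph V) [DecidableRel G.Adj]
    (s : ℕ) (sc : V → V → ℕ) : List V → ℕ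
  | [] => 0
  | [_] => 0
  | u :: v :: rest =>
      (if G.Adj u v then s + 7 else sc u v) + travelCost G s sc (v :: rest)

section aux
variable {V : Type*} (G : SimpleGraph V) [DecidableRel G.Adj]
    (s : ℕ) (sc : V → V → ℕ)

lemma travelCost_ge (hsc : ∀ u v, s + 8 ≤ sc u v) :
    ∀ l : List V, (s + 7) * (l.length - 1) ≤ travelCost G s sc l
  | [] => by simp [travelCost]
  | [a] => by simp [travelCost]
  | a :: b :: rest => by
    have ih := travelCost_ge hsc (b :: rest)
    have hstep : s + 7 ≤ (if G.Adj a b then s + 7 else sc a b) := by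
      split
      · exact le_rfl
      · exact le_trans (by omega) (hsc a b)
    simp only [travelCost, List.length_cons, Nat.add_sub_cancel] at *
    rw [Nat.mul_succ]
    linarith

lemma travelCost_chain : ∀ l : List V, l.Chain' G.Adj →
    travelCost G s sc l = (s + 7) * (l.length - 1)
  | [] , _ => by simp [travelCost]
  | [a], _ => by simp [travelCost]
  | a :: b :: rest, h => by
    obtain ⟨hab, htail⟩ := List.isChain_cons_cons.mp h
    have ih := travelCost_chain (b :: rest) htail
    simp only [travelCost, if_pos hab, ih, List.length_cons, Nat.add_sub_cancel]
    rw [Nat.mul_succ]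
    ring

lemma chain_of_travelCost (hsc : ∀ u v, s + 8 ≤ sc u v) : ∀ l : List V,
    travelCost G s sc l = (s + 7) * (l.length - 1) → l.Chain' G.Adj
  | [], _ => List.isChain_nil
  | [a], _ => List.isChain_singleton a
  | a :: b :: rest, h => by
    have ih := travelCost_ge G s sc hsc (b :: rest)
    have hstep : s + 7 ≤ (if G.Adj a b then s + 7 else sc a b) := by
      split
      · exact le_rfl
      · exact le_trans (by omega) (hsc a b)
    simp only [travelCost, List.length_cons, Nat.add_sub_cancel] at *
    rw [Nat.mul_succ] at h
    have hstepeq : (if G.Adj a b then s + 7 else sc a b) = s + 7 := by linarith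
    have htaileq : travelCost G s sc (b :: rest) = (s + 7) * rest.length := by linarith
    refine List.isChain_cons_cons.mpr ⟨?_, chain_of_travelCost hsc (b :: rest) (by
      simpa [Nat.add_sub_cancel] using htaileq)⟩
    by_contra hadj
    rw [if_neg hadj] at hstepeq
    have := hsc a b
    omega

lemma walk_of_chain : ∀ l : List V, l ≠ [] → l.Chain' G.Adj →
    ∃ (a b : V) (w : G.Walk a b), w.support = l
  | [], h, _ => absurd rfl h
  | [a], _, _ => ⟨a, a, SimpleGraph.Walk.nil, rfl⟩
  | a :: b :: rest, _, h => by
    obtain ⟨hab, htail⟩ := List.isChain_cons_cons.mp h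
    obtain ⟨c, d, w, hw⟩ := walk_of_chain (b :: rest) (by simp) htail
    have hc : c = b := by
      have h2 := w.support_eq_cons
      rw [hw] at h2
      exact (List.cons.injEq _ _ _ _ ▸ h2).1.symm
    subst hc
    exact ⟨a, d, SimpleGraph.Walk.cons hab w, by simp [hw]⟩

end aux

/-- In the hardness construction, solving each of the `|V|` vertex gadgets
costs exactly `t_g` moves, travel between adjacent gadgets costs exactly
`s + 7` moves, and any bridge between non-adjacent gadgets costs strictly
more (at least `s + 8`).  Then the minimum total number of moves over all
tours visiting every vertex is exactly `(s+7)·(|V|-1) + t_g·|V|` iff the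
graph has a Hamiltonian path. -/
theorem stmt8 {V : Type*} [Fintype V] [DecidableEq V]
    (G : SimpleGraph V) [DecidableRel G.Adj] (hconn : G.Connected)
    (s tg : ℕ) (hs : 1 ≤ s)
    (sc : V → V → ℕ) (hsc : ∀ u v, s + 8 ≤ sc u v) :
    IsLeast {c : ℕ | ∃ l : List V, (∀ v : V, v ∈ l) ∧
        c = travelCost G s sc l + tg * Fintype.card V}
      ((s + 7) * (Fintype.card V - 1) + tg * Fintype.card V) ↔
    ∃ (a b : V) (w : G.Walk a b), w.IsHamiltonian := by
  have hlenge : ∀ l : List V, (∀ v : V, v ∈ l) → Fintype.card V ≤ l.length := by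
    intro l hl
    calc Fintype.card V = Finset.univ.card := rfl
      _ ≤ l.toFinset.card := Finset.card_le_card (fun v _ => List.mem_toFinset.mpr (hl v))
      _ ≤ l.length := List.toFinset_card_le l
  constructor
  · rintro ⟨⟨l, hl, hc⟩, -⟩
    have hge := travelCost_ge G s sc hsc l
    have hlen := hlenge l hl
    have hcard : 0 < Fintype.card V := @Fintype.card_pos _ _ hconn.nonempty
    have hleq : l.length = Fintype.card V := by
      by_contra hne
      have h1 : Fintype.card V - 1 + 1 ≤ l.length - 1 := by omega
      have h2 : (s + 7) * (Fintype.card V - 1 + 1) ≤ (s + 7) * (l.length - 1) :=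
        Nat.mul_le_mul_left _ h1
      rw [Nat.mul_succ] at h2
      linarith
    have hcost : travelCost G s sc l = (s + 7) * (l.length - 1) := by
      rw [hleq] at hge ⊢; linarith
    have hchain := chain_of_travelCost G s sc hsc l hcost
    have hne : l ≠ [] := by
      intro h
      obtain ⟨v⟩ := hconn.nonempty
      simpa [h] using hl v
    obtain ⟨a, b, w, hw⟩ := walk_of_chain G l hne hchain
    refine ⟨a, b, w, ?_⟩
    intro v
    rw [hw]
    have hnodup : l.Nodup := by
      rw [← Multiset.coe_nodup, ← Multiset.toFinset_card_eq_card_iff_nodup]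
      apply le_antisymm (Multiset.toFinset_card_le _)
      show l.length ≤ l.toFinset.card
      rw [hleq]
      exact Finset.card_le_card (fun v _ => List.mem_toFinset.mpr (hl v))
    exact List.count_eq_one_of_mem hnodup (hl v)
  · rintro ⟨a, b, w, hw⟩
    constructor
    · refine ⟨w.support, fun v => hw.mem_support v, ?_⟩
      rw [travelCost_chain G s sc w.support w.isChain_adj_support,
        SimpleGraph.Walk.length_support, hw.length_eq]
      simp
    · rintro c ⟨l, hl, rfl⟩
      have hge := travelCost_ge G s sc hsc l
      have hlen := hlenge l hl
      have : (s + 7) * (Fintype.card V - 1) ≤ (s + 7) * (l.length - 1) :=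
        Nat.mul_le_mul_left _ (by omega)
      linarith
end

section
/- In a rectangular grid workspace where cells are free, tile, or obstacle, if the start and goal tile configurations are connected polyominoes located within the same connected component of the free space (cells not occupied by obstacles), then there exists a feasible reconfiguration sequence transforming the start configuration into the goal configuration, where each step moves one tile from the current configuration to a free cell adjacent (in free space) to the remaining configuration while keeping the remaining tiles connected. -/
/-- The grid graph induced on a finite set of cells: two cells are adjacent
iff their L1-distance is 1 (4-adjacency). -/
def gridGraphOn (C : Finset (ℤ × ℤ)) : SimpleGraph C :=
  SimpleGraph.fromRel fun u v =>
    |(u : ℤ × ℤ).1 - (v : ℤ × ℤ).1| + |(u : ℤ × ℤ).2 - (v : ℤ × ℤ).2| = 1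

/-- Connectivity of a set of cells, with the empty set and singletons
trivially connected. -/
def GridConnected (C : Finset (ℤ × ℤ)) : Prop :=
  C.card ≤ 1 ∨ (gridGraphOn C).Connected

/-- One reconfiguration step within free space `F`: remove a tile `t` from the
current configuration `C` (requiring the rest to stay connected) and place it
at a free cell `t'` so that the new configuration is again connected. -/
def ReconfStep (F : Finset (ℤ × ℤ)) (C C' : Finset (ℤ × ℤ)) : Prop :=
  ∃ t ∈ C, ∃ t' ∈ F, t' ∉ C.erase t ∧
    GridConnected (C.erase t) ∧
    C' = insert t' (C.erase t) ∧ GridConnected C'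

namespace Stmt16Aux

def adj (a b : ℤ × ℤ) : Prop := |a.1 - b.1| + |a.2 - b.2| = 1

lemma adj_symm {a b : ℤ × ℤ} (h : adj a b) : adj b a := by
  unfold adj at *
  rw [abs_sub_comm a.1, abs_sub_comm a.2] at h
  exact h

lemma adj_ne {a b : ℤ × ℤ} (h : adj a b) : a ≠ b := by
  rintro rfl; simp [adj] at h

def stepIn (C : Finset (ℤ × ℤ)) (x y : ℤ × ℤ) : Prop := x ∈ C ∧ y ∈ C ∧ adj x y

lemma stepIn_symm {C : Finset (ℤ × ℤ)} : Symmetric (stepIn C) :=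
  fun _ _ ⟨hx, hy, h⟩ => ⟨hy, hx, adj_symm h⟩

def reachIn (C : Finset (ℤ × ℤ)) (a b : ℤ × ℤ) : Prop :=
  Relation.ReflTransGen (stepIn C) a b

lemma reachIn_symm {C : Finset (ℤ × ℤ)} {a b : ℤ × ℤ} (h : reachIn C a b) :
    reachIn C b a := (@Relation.ReflTransGen.stdSymm _ _ ⟨fun _ _ hh => stepIn_symm hh⟩).symm _ _ h

lemma reachIn_mono {C D : Finset (ℤ × ℤ)} (hCD : C ⊆ D) {a b : ℤ × ℤ}
    (h : reachIn C a b) : reachIn D a b := by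
  induction h with
  | refl => exact .refl
  | tail _ hstep ih => exact ih.tail ⟨hCD hstep.1, hCD hstep.2.1, hstep.2.2⟩

def ConnRel (C : Finset (ℤ × ℤ)) : Prop := ∀ a ∈ C, ∀ b ∈ C, reachIn C a b

lemma reach_to_graph {C : Finset (ℤ × ℤ)} {a b : ℤ × ℤ} (h : reachIn C a b) :
    ∀ (ha : a ∈ C) (hb : b ∈ C), (gridGraphOn C).Reachable ⟨a, ha⟩ ⟨b, hb⟩ := by
  induction h with
  | refl => intro ha hb; rfl
  | tail _ hstep ih =>
      intro ha hb
      obtain ⟨hx, hy, hadj⟩ := hstep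
      refine (ih ha hx).trans (SimpleGraph.Adj.reachable ?_)
      rw [gridGraphOn, SimpleGraph.fromRel_adj]
      exact ⟨fun hh => adj_ne hadj (congrArg Subtype.val hh), Or.inl hadj⟩

lemma graph_to_reach {C : Finset (ℤ × ℤ)} : ∀ {u v : C}, (gridGraphOn C).Walk u v →
    reachIn C (u : ℤ × ℤ) (v : ℤ × ℤ) := by
  intro u v w
  induction w with
  | nil => exact .refl
  | @cons x y z h p ih =>
      refine Relation.ReflTransGen.head ?_ ih
      rw [gridGraphOn, SimpleGraph.fromRel_adj] at h
      obtain ⟨hne, h | h⟩ := h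
      · exact ⟨x.2, y.2, h⟩
      · exact ⟨x.2, y.2, adj_symm h⟩

lemma gridConnected_of_connRel {C : Finset (ℤ × ℤ)} (h : ConnRel C) : GridConnected C := by
  rcases le_or_gt C.card 1 with h1 | h1
  · exact Or.inl h1
  · have hne : C.Nonempty := Finset.card_pos.mp (by omega)
    haveI : Nonempty C := ⟨⟨hne.choose, hne.choose_spec⟩⟩
    refine Or.inr ⟨fun u v => ?_⟩
    obtain ⟨a, ha⟩ := u; obtain ⟨b, hb⟩ := v
    exact reach_to_graph (h a ha b hb) ha hb

lemma connRel_of_gridConnected {C : Finset (ℤ × ℤ)} (h : GridConnected C) : ConnRel C := by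
  intro a ha b hb
  rcases h with h1 | h1
  · have : a = b := Finset.card_le_one.mp h1 a ha b hb
    subst this; exact Relation.ReflTransGen.refl
  · obtain ⟨w⟩ := h1.preconnected ⟨a, ha⟩ ⟨b, hb⟩
    exact graph_to_reach w

lemma connRel_singleton (v : ℤ × ℤ) : ConnRel {v} := by
  intro a ha b hb
  simp only [Finset.mem_singleton] at ha hb
  subst ha; subst hb
  exact Relation.ReflTransGen.refl

lemma connRel_insert {P : Finset (ℤ × ℤ)} {x y : ℤ × ℤ} (hP : ConnRel P)
    (hx : x ∈ P) (hadj : adj x y) : ConnRel (insert y P) := by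
  have hyx : reachIn (insert y P) y x :=
    Relation.ReflTransGen.single ⟨Finset.mem_insert_self y P,
      Finset.mem_insert_of_mem hx, adj_symm hadj⟩
  have key : ∀ b ∈ insert y P, reachIn (insert y P) y b := by
    intro b hb
    rcases Finset.mem_insert.mp hb with rfl | hb
    · exact Relation.ReflTransGen.refl
    · exact hyx.trans (reachIn_mono (Finset.subset_insert y P) (hP x hx b hb))
  intro a ha b hb
  rcases Finset.mem_insert.mp ha with rfl | ha
  · exact key b hb
  · exact (reachIn_mono (Finset.subset_insert y P) (hP a ha x hx)).trans
      ((reachIn_symm hyx).trans (key b hb))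

lemma exists_crossing {C P : Finset (ℤ × ℤ)} {b : ℤ × ℤ} :
    ∀ {a : ℤ × ℤ}, reachIn C a b → a ∈ P → b ∉ P →
    ∃ x ∈ P, x ∈ C ∧ ∃ y ∈ C, y ∉ P ∧ adj x y := by
  intro a h
  induction h using Relation.ReflTransGen.head_induction_on with
  | refl => intro ha hb; exact absurd ha hb
  | head hstep _ ih =>
      intro ha hb
      rename_i c _
      by_cases hc : c ∈ P
      · exact ih hc hb
      · exact ⟨_, ha, hstep.1, c, hstep.2.1, hc, hstep.2.2⟩

lemma exists_removable : ∀ (n : ℕ) (C P : Finset (ℤ × ℤ)), (C \ P).card = n →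
    ConnRel C → ConnRel P → P ⊆ C → P.Nonempty → P ≠ C →
    ∃ u ∈ C, u ∉ P ∧ ConnRel (C.erase u) := by
  intro n
  induction n using Nat.strong_induction_on with
  | _ n ih =>
    intro C P hn hC hP hPC hPne hne
    obtain ⟨b, hbC, hbP⟩ : ∃ b ∈ C, b ∉ P := by
      by_contra hcon
      push_neg at hcon
      exact hne (Finset.Subset.antisymm hPC hcon)
    obtain ⟨p₀, hp₀⟩ := hPne
    obtain ⟨x, hxP, hxC, y, hyC, hyP, hxy⟩ :=
      exists_crossing (hC p₀ (hPC hp₀) b hbC) hp₀ hbP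
    set P' := insert y P with hP'
    have hP'conn : ConnRel P' := connRel_insert hP hxP hxy
    have hP'C : P' ⊆ C := Finset.insert_subset hyC hPC
    by_cases hPC' : P' = C
    · refine ⟨y, hyC, hyP, ?_⟩
      have : C.erase y = P := by
        rw [← hPC', hP', Finset.erase_insert hyP]
      rw [this]; exact hP
    · have hcard : (C \ P').card < n := by
        have : C \ P' = (C \ P).erase y := by
          rw [hP', Finset.sdiff_insert]
        rw [this, ← hn]
        exact Finset.card_erase_lt_of_mem (Finset.mem_sdiff.mpr ⟨hyC, hyP⟩)
      obtain ⟨u, huC, huP', hu⟩ := ih _ hcard C P' rfl hC hP'conn hP'C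
        ⟨y, Finset.mem_insert_self y P⟩ hPC'
      exact ⟨u, huC, fun h => huP' (Finset.mem_insert_of_mem h), hu⟩

lemma exists_rank : ∀ (n : ℕ) (H : Finset (ℤ × ℤ)), H.card = n → ConnRel H → H.Nonempty →
    ∃ (ρ : ℤ × ℤ → ℕ) (r : ℤ × ℤ), r ∈ H ∧ Set.InjOn ρ H ∧ (∀ v ∈ H, ρ v < n) ∧
      (∀ v ∈ H, v ≠ r → ∃ p ∈ H, adj p v ∧ ρ p < ρ v) := by
  intro n
  induction n using Nat.strong_induction_on with
  | _ n ih =>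
    intro H hn hH hHne
    rcases le_or_gt H.card 1 with h1 | h1
    · obtain ⟨r, hr⟩ := hHne
      refine ⟨fun _ => 0, r, hr, ?_, ?_, ?_⟩
      · intro a ha b hb _
        exact Finset.card_le_one.mp h1 a ha b hb
      · intro v hv
        have : 1 ≤ H.card := Finset.card_pos.mpr ⟨r, hr⟩
        show (0:ℕ) < n
        omega
      · intro v hv hvr
        exact absurd (Finset.card_le_one.mp h1 v hv r hr) hvr
    · obtain ⟨h, hh⟩ := hHne
      have hne : ({h} : Finset (ℤ × ℤ)) ≠ H := by
        intro hcon
        rw [← hcon] at h1; simp at h1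
      obtain ⟨u, huH, huh, huconn⟩ := exists_removable _ H {h} rfl hH
        (connRel_singleton h) (Finset.singleton_subset_iff.mpr hh) (Finset.singleton_nonempty h) hne
      simp only [Finset.mem_singleton] at huh
      -- u has a neighbor in H.erase u
      obtain ⟨y, hyH, hyu, hadjuy⟩ : ∃ y ∈ H, y ≠ u ∧ adj u y := by
        have := hH u huH h hh
        rcases Relation.ReflTransGen.cases_head this with rfl | ⟨c, hstep, _⟩
        · exact absurd rfl huh
        · exact ⟨c, hstep.2.1, fun hc => adj_ne hstep.2.2 (hc ▸ rfl), hstep.2.2⟩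
      have hcard : (H.erase u).card = n - 1 := by
        rw [Finset.card_erase_of_mem huH, hn]
      have hlt : n - 1 < n := by omega
      obtain ⟨ρ', r', hr'mem, hinj', hbound', hprop'⟩ := ih _ hlt (H.erase u) hcard huconn
        ⟨h, Finset.mem_erase.mpr ⟨fun hc => huh hc.symm, hh⟩⟩
      classical
      refine ⟨fun x => if x = u then n - 1 else ρ' x, r', Finset.mem_of_mem_erase hr'mem,
        ?_, ?_, ?_⟩
      · intro a ha b hb hab
        by_cases hau : a = u <;> by_cases hbu : b = u
        · rw [hau, hbu]
        · simp only [hau, if_pos, if_neg hbu] at hab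
          have : b ∈ H.erase u := Finset.mem_erase.mpr ⟨hbu, hb⟩
          have := hbound' b this
          omega
        · simp only [hbu, if_pos, if_neg hau] at hab
          have : a ∈ H.erase u := Finset.mem_erase.mpr ⟨hau, ha⟩
          have := hbound' a this
          omega
        · simp only [if_neg hau, if_neg hbu] at hab
          exact hinj' (Finset.mem_coe.mpr (Finset.mem_erase.mpr ⟨hau, ha⟩))
            (Finset.mem_coe.mpr (Finset.mem_erase.mpr ⟨hbu, hb⟩)) hab
      · intro v hv
        by_cases hvu : v = u
        · simp only [hvu, if_pos]; omega
        · simp only [if_neg hvu]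
          have := hbound' v (Finset.mem_erase.mpr ⟨hvu, hv⟩)
          omega
      · intro v hv hvr
        by_cases hvu : v = u
        · subst hvu
          refine ⟨y, hyH, adj_symm hadjuy, ?_⟩
          simp only [if_neg hyu, if_pos]
          have := hbound' y (Finset.mem_erase.mpr ⟨hyu, hyH⟩)
          omega
        · obtain ⟨p, hpmem, hpadj, hplt⟩ := hprop' v (Finset.mem_erase.mpr ⟨hvu, hv⟩) hvr
          have hpu : p ≠ u := (Finset.mem_erase.mp hpmem).1
          refine ⟨p, Finset.mem_of_mem_erase hpmem, hpadj, ?_⟩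
          simp only [if_neg hpu, if_neg hvu]
          exact hplt

section Rank

variable {H : Finset (ℤ × ℤ)} {ρ : ℤ × ℤ → ℕ} {r : ℤ × ℤ}

lemma root_min (hr : r ∈ H)
    (hprop : ∀ v ∈ H, v ≠ r → ∃ p ∈ H, adj p v ∧ ρ p < ρ v) :
    ∀ v ∈ H, ρ r ≤ ρ v := by
  suffices key : ∀ (k : ℕ) (v : ℤ × ℤ), v ∈ H → ρ v = k → ρ r ≤ ρ v by
    intro v hv; exact key (ρ v) v hv rfl
  intro k
  induction k using Nat.strong_induction_on with
  | _ k ih =>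
    intro v hv hk
    by_cases hvr : v = r
    · subst hvr; exact le_refl _
    · obtain ⟨p, hp, _, hplt⟩ := hprop v hv hvr
      have := ih (ρ p) (hk ▸ hplt) p hp rfl
      omega

lemma connRel_sublevel (hr : r ∈ H)
    (hprop : ∀ v ∈ H, v ≠ r → ∃ p ∈ H, adj p v ∧ ρ p < ρ v) (τ : ℕ) :
    ConnRel (H.filter fun v => ρ v < τ) := by
  have hmin := root_min hr hprop
  set P := H.filter fun v => ρ v < τ with hP
  have key : ∀ (k : ℕ) (v : ℤ × ℤ), v ∈ P → ρ v = k → reachIn P v r := by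
    intro k
    induction k using Nat.strong_induction_on with
    | _ k ih =>
      intro v hv hk
      obtain ⟨hvH, hvτ⟩ := Finset.mem_filter.mp hv
      by_cases hvr : v = r
      · subst hvr; exact Relation.ReflTransGen.refl
      · obtain ⟨p, hpH, hpadj, hplt⟩ := hprop v hvH hvr
        have hpP : p ∈ P := Finset.mem_filter.mpr ⟨hpH, by omega⟩
        exact Relation.ReflTransGen.head ⟨hv, hpP, adj_symm hpadj⟩
          (ih (ρ p) (hk ▸ hplt) p hpP rfl)
  intro a ha b hb
  exact (key (ρ a) a ha rfl).trans (reachIn_symm (key (ρ b) b hb rfl))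

lemma image_rank_eq (hinj : Set.InjOn ρ H) (hbound : ∀ v ∈ H, ρ v < H.card) :
    H.image ρ = Finset.range H.card := by
  apply Finset.eq_of_subset_of_card_le
  · intro k hk
    obtain ⟨v, hv, rfl⟩ := Finset.mem_image.mp hk
    exact Finset.mem_range.mpr (hbound v hv)
  · rw [Finset.card_range, Finset.card_image_of_injOn hinj]

lemma card_sublevel (hinj : Set.InjOn ρ H) (hbound : ∀ v ∈ H, ρ v < H.card)
    {τ : ℕ} (hτ : τ ≤ H.card) :
    (H.filter fun v => ρ v < τ).card = τ := by
  classical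
  have h1 : (H.filter fun v => ρ v < τ).image ρ = (H.image ρ).filter (fun k => k < τ) := by
    rw [Finset.filter_image]
  have h2 : (H.image ρ).filter (fun k => k < τ) = Finset.range τ := by
    rw [image_rank_eq hinj hbound]
    ext k
    simp only [Finset.mem_filter, Finset.mem_range]
    omega
  have h3 : ((H.filter fun v => ρ v < τ).image ρ).card = τ := by
    rw [h1, h2, Finset.card_range]
  rw [Finset.card_image_of_injOn (hinj.mono (by
    intro x hx
    exact Finset.mem_coe.mpr (Finset.mem_of_mem_filter _ (Finset.mem_coe.mp hx))))] at h3
  exact h3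

end Rank

lemma descent (F H : Finset (ℤ × ℤ)) (hHF : H ⊆ F) (ρ : ℤ × ℤ → ℕ) (r : ℤ × ℤ)
    (hr : r ∈ H) (hinj : Set.InjOn ρ H) (hbound : ∀ v ∈ H, ρ v < H.card)
    (hprop : ∀ v ∈ H, v ≠ r → ∃ p ∈ H, adj p v ∧ ρ p < ρ v)
    (n : ℕ) (hn2 : 2 ≤ n) :
    ∀ (m : ℕ) (A : Finset (ℤ × ℤ)), (∑ v ∈ A, ρ v) = m → A ⊆ H → A.card = n →
      ConnRel A →
      Relation.ReflTransGen (ReconfStep F) A (H.filter fun v => ρ v < n) := by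
  intro m
  induction m using Nat.strong_induction_on with
  | _ m ih =>
    intro A hm hAH hAn hAconn
    set T := H.filter fun v => ρ v < n with hT
    by_cases hAT : A = T
    · exact hAT ▸ Relation.ReflTransGen.refl
    -- construct one improving move
    have hAne : A.Nonempty := Finset.card_pos.mp (by omega)
    have main : ∃ (u q : ℤ × ℤ), u ∈ A ∧ q ∈ H ∧ q ∉ A ∧ ρ q < ρ u ∧
        ConnRel (A.erase u) ∧ ConnRel (insert q (A.erase u)) := by
      by_cases hrA : r ∈ A
      · -- case r ∈ A
        have hHAne : (H \ A).Nonempty := by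
          rw [Finset.sdiff_nonempty]
          intro hcon
          have hHA : H = A := Finset.Subset.antisymm hcon hAH
          apply hAT
          rw [hT, hHA]
          apply Finset.Subset.antisymm
          · intro a ha; exact Finset.mem_filter.mpr ⟨ha, (hHA ▸ hAn) ▸ hbound a (hHA ▸ ha)⟩
          · exact Finset.filter_subset _ _
        obtain ⟨w, hw, hwmin⟩ := Finset.exists_min_image (H \ A) ρ hHAne
        obtain ⟨hwH, hwA⟩ := Finset.mem_sdiff.mp hw
        have hwr : w ≠ r := fun hc => hwA (hc ▸ hrA)
        obtain ⟨p, hpH, hpadj, hplt⟩ := hprop w hwH hwr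
        have hpA : p ∈ A := by
          by_contra hc
          have := hwmin p (Finset.mem_sdiff.mpr ⟨hpH, hc⟩)
          omega
        set P := H.filter fun v => ρ v < ρ w with hP
        have hPA : P ⊆ A := by
          intro v hv
          obtain ⟨hvH, hvlt⟩ := Finset.mem_filter.mp hv
          by_contra hc
          have := hwmin v (Finset.mem_sdiff.mpr ⟨hvH, hc⟩)
          omega
        have hpP : p ∈ P := Finset.mem_filter.mpr ⟨hpH, hplt⟩
        have hPconn : ConnRel P := connRel_sublevel hr hprop (ρ w)
        have hPne : P ≠ A := by
          intro hc
          have hwcard : ρ w ≤ H.card := le_of_lt (hbound w hwH)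
          have hPcard : P.card = ρ w := card_sublevel hinj hbound hwcard
          have : ρ w = n := by rw [← hPcard, hc, hAn]
          apply hAT
          rw [hT, ← this, ← hP, hc]
        obtain ⟨u, huA, huP, huconn⟩ := exists_removable _ A P rfl hAconn hPconn hPA
          ⟨p, hpP⟩ hPne
        have hpu : p ≠ u := fun hc => huP (hc ▸ hpP)
        have hpE : p ∈ A.erase u := Finset.mem_erase.mpr ⟨hpu, hpA⟩
        have hwu : ρ w < ρ u := by
          have h1 : ¬ (ρ u < ρ w) := fun hc =>
            huP (Finset.mem_filter.mpr ⟨hAH huA, hc⟩)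
          rcases Nat.lt_or_ge (ρ w) (ρ u) with h | h
          · exact h
          · have : ρ u = ρ w := by omega
            have : u = w := hinj (Finset.mem_coe.mpr (hAH huA)) (Finset.mem_coe.mpr hwH) this
            exact absurd (this ▸ huA) hwA
        exact ⟨u, w, huA, hwH, hwA, hwu, huconn,
          connRel_insert huconn hpE hpadj⟩
      · -- case r ∉ A
        obtain ⟨v, hv, hvmin⟩ := Finset.exists_min_image A ρ hAne
        have hvr : v ≠ r := fun hc => hrA (hc ▸ hv)
        obtain ⟨p, hpH, hpadj, hplt⟩ := hprop v (hAH hv) hvr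
        have hpA : p ∉ A := by
          intro hc
          have := hvmin p hc
          omega
        have hsne : ({v} : Finset (ℤ × ℤ)) ≠ A := by
          intro hc
          have : A.card = 1 := by rw [← hc]; simp
          omega
        obtain ⟨u, huA, huv, huconn⟩ := exists_removable _ A {v} rfl hAconn
          (connRel_singleton v) (Finset.singleton_subset_iff.mpr hv)
          (Finset.singleton_nonempty v) hsne
        simp only [Finset.mem_singleton] at huv
        have hvE : v ∈ A.erase u := Finset.mem_erase.mpr ⟨fun hc => huv hc.symm, hv⟩
        have hpu : ρ p < ρ u := lt_of_lt_of_le hplt (hvmin u huA)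
        exact ⟨u, p, huA, hpH, hpA, hpu, huconn,
          connRel_insert huconn hvE (adj_symm hpadj)⟩
    obtain ⟨u, q, huA, hqH, hqA, hlt, hEconn, hA'conn⟩ := main
    have hqE : q ∉ A.erase u := fun hc => hqA (Finset.mem_of_mem_erase hc)
    set A' := insert q (A.erase u) with hA'
    have hstep : ReconfStep F A A' :=
      ⟨u, huA, q, hHF hqH, hqE, gridConnected_of_connRel hEconn, rfl,
        gridConnected_of_connRel hA'conn⟩
    have hsum1 : ∑ v ∈ A.erase u, ρ v + ρ u = ∑ v ∈ A, ρ v :=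
      Finset.sum_erase_add A ρ huA
    have hsum2 : ∑ v ∈ A', ρ v = ρ q + ∑ v ∈ A.erase u, ρ v :=
      Finset.sum_insert hqE
    have hmlt : ∑ v ∈ A', ρ v < m := by omega
    have hA'H : A' ⊆ H := Finset.insert_subset hqH ((Finset.erase_subset u A).trans hAH)
    have hA'n : A'.card = n := by
      rw [hA', Finset.card_insert_of_notMem hqE, Finset.card_erase_of_mem huA, hAn]
      omega
    exact Relation.ReflTransGen.head hstep
      (ih _ hmlt A' rfl hA'H hA'n hA'conn)

lemma step_sub {F C C' : Finset (ℤ × ℤ)} (h : ReconfStep F C C') (hCF : C ⊆ F) :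
    C' ⊆ F := by
  obtain ⟨t, ht, t', ht'F, _, _, hC', _⟩ := h
  rw [hC']
  exact Finset.insert_subset ht'F ((Finset.erase_subset t C).trans hCF)

lemma step_rev {F C C' : Finset (ℤ × ℤ)} (h : ReconfStep F C C') (hCF : C ⊆ F)
    (hCconn : GridConnected C) : ReconfStep F C' C := by
  obtain ⟨t, ht, t', ht'F, ht'E, hconnE, hC', hconnC'⟩ := h
  have hE : C'.erase t' = C.erase t := by
    rw [hC', Finset.erase_insert ht'E]
  refine ⟨t', ?_, t, hCF ht, ?_, ?_, ?_, hCconn⟩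
  · rw [hC']; exact Finset.mem_insert_self t' _
  · rw [hE]; exact Finset.notMem_erase t C
  · rw [hE]; exact hconnE
  · rw [hE, Finset.insert_erase ht]

lemma chain_inv {F C D : Finset (ℤ × ℤ)} (h : Relation.ReflTransGen (ReconfStep F) C D)
    (hCF : C ⊆ F) (hCconn : GridConnected C) : D ⊆ F ∧ GridConnected D := by
  induction h with
  | refl => exact ⟨hCF, hCconn⟩
  | tail _ hstep ih =>
      refine ⟨step_sub hstep ih.1, ?_⟩
      obtain ⟨_, _, _, _, _, _, _, hconn⟩ := hstep
      exact hconn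

lemma chain_rev {F C D : Finset (ℤ × ℤ)} (h : Relation.ReflTransGen (ReconfStep F) C D)
    (hCF : C ⊆ F) (hCconn : GridConnected C) :
    Relation.ReflTransGen (ReconfStep F) D C := by
  induction h with
  | refl => exact Relation.ReflTransGen.refl
  | tail _ hstep ih =>
      rename_i D' D hCD'
      obtain ⟨hD'F, hD'conn⟩ := chain_inv hCD' hCF hCconn
      exact Relation.ReflTransGen.head (step_rev hstep hD'F hD'conn) ih

lemma component_key {F : Finset (ℤ × ℤ)} {s0 : ℤ × ℤ}
    [DecidablePred fun v => reachIn F s0 v] :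
    ∀ {a b : ℤ × ℤ}, reachIn F a b → reachIn F s0 a →
      reachIn (F.filter fun v => reachIn F s0 v) a b ∧ reachIn F s0 b := by
  intro a b h ha
  induction h with
  | refl => exact ⟨Relation.ReflTransGen.refl, ha⟩
  | tail _ hstep ih =>
      obtain ⟨ihf, ihs⟩ := ih
      obtain ⟨hxF, hyF, hadj⟩ := hstep
      have hs0y : reachIn F s0 _ := ihs.tail ⟨hxF, hyF, hadj⟩
      exact ⟨ihf.tail ⟨Finset.mem_filter.mpr ⟨hxF, ihs⟩,
        Finset.mem_filter.mpr ⟨hyF, hs0y⟩, hadj⟩, hs0y⟩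

lemma connRel_component (F : Finset (ℤ × ℤ)) (s0 : ℤ × ℤ)
    [DecidablePred fun v => reachIn F s0 v] :
    ConnRel (F.filter fun v => reachIn F s0 v) := by
  intro a ha b hb
  obtain ⟨haF, has0⟩ := Finset.mem_filter.mp ha
  obtain ⟨hbF, hbs0⟩ := Finset.mem_filter.mp hb
  have hab : reachIn F a b := (reachIn_symm has0).trans hbs0
  exact (component_key hab has0).1

end Stmt16Aux


open Stmt16Aux in
/-- In a rectangular grid workspace with obstacle cells `O` and free cells
`F = R \ O`, if the start and goal configurations are connected polyominoes of
equal size lying in the same 4-connected component of the free space, then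
there is a feasible reconfiguration sequence (moving one tile at a time while
keeping the remaining tiles connected) transforming the start into the goal. -/
theorem stmt16 (x1 x2 y1 y2 : ℤ)
    (R O F S G : Finset (ℤ × ℤ))
    (hR : R = Finset.Icc x1 x2 ×ˢ Finset.Icc y1 y2)
    (hO : O ⊆ R) (hF : F = R \ O)
    (hS : S ⊆ F) (hG : G ⊆ F)
    (hcard : S.card = G.card) (hSne : S.Nonempty)
    (hSconn : GridConnected S) (hGconn : GridConnected G)
    (hcomp : ∀ (u v : ℤ × ℤ) (hu : u ∈ F) (hv : v ∈ F),
      u ∈ S ∪ G → v ∈ S ∪ G → (gridGraphOn F).Reachable ⟨u, hu⟩ ⟨v, hv⟩) :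
    Relation.ReflTransGen (ReconfStep F) S G := by
  classical
  have hSconn' := connRel_of_gridConnected hSconn
  have hGconn' := connRel_of_gridConnected hGconn
  obtain ⟨s0, hs0⟩ := hSne
  rcases le_or_gt S.card 1 with h1 | h1
  · have hS1 : S.card = 1 := le_antisymm h1 (Finset.card_pos.mpr ⟨s0, hs0⟩)
    obtain ⟨s, hs⟩ := Finset.card_eq_one.mp hS1
    have hG1 : G.card = 1 := hcard ▸ hS1
    obtain ⟨g, hg⟩ := Finset.card_eq_one.mp hG1
    refine Relation.ReflTransGen.single ⟨s, ?_, g, ?_, ?_, ?_, ?_, hGconn⟩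
    · rw [hs]; exact Finset.mem_singleton_self s
    · exact hG (hg ▸ Finset.mem_singleton_self g)
    · rw [hs, Finset.erase_singleton]; exact Finset.notMem_empty g
    · rw [hs, Finset.erase_singleton]; exact Or.inl (by simp)
    · rw [hs, Finset.erase_singleton, hg]; simp
  · set H := F.filter (fun v => reachIn F s0 v) with hH
    have hHF : H ⊆ F := Finset.filter_subset _ _
    have hSH : S ⊆ H := fun s hsS =>
      Finset.mem_filter.mpr ⟨hS hsS, reachIn_mono hS (hSconn' s0 hs0 s hsS)⟩
    have hGH : G ⊆ H := by
      intro g hgG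
      have h := hcomp s0 g (hS hs0) (hG hgG) (Finset.mem_union_left G hs0)
        (Finset.mem_union_right S hgG)
      obtain ⟨w⟩ := h
      exact Finset.mem_filter.mpr ⟨hG hgG, graph_to_reach w⟩
    have hHconn : ConnRel H := connRel_component F s0
    have hHne : H.Nonempty := ⟨s0, hSH hs0⟩
    obtain ⟨ρ, r, hr, hinj, hbound, hprop⟩ := exists_rank H.card H rfl hHconn hHne
    have dS := descent F H hHF ρ r hr hinj hbound hprop S.card (by omega) _ S rfl hSH
      rfl hSconn'
    have dG := descent F H hHF ρ r hr hinj hbound hprop S.card (by omega) _ G rfl hGH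
      hcard.symm hGconn'
    exact dS.trans (chain_rev dG hG hGconn)
end
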